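/- Let A be a periphery component (vertices of degree at most ⌊c/2⌋+1), L an STC-labeling of G, and P=(v_0,…,v_{r-1},v_0) a cycle in A with at least one weak edge of L on P and color sequence (q_0,…,q_{r-1}). Then for each i ∈ {0,…,r−1} there exists an STC-labeling L_i agreeing with L outside E(P) such that either the color sequence of P under L_i is the cyclic rotation j ↦ q_{(i+j) mod r}, or L_i has strictly fewer weak edges than L. -/

import Mathlib

/-!
A weak edge `uv` of the cycle can be pushed one step forward: if the next edge `vw` has colour
`β`, swap the labels of `uv` and `vw`. Since `deg u + deg v ≤ c + 2`, the other edges at `u`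
and `v` carry at most `c - 1` colours; so either `β` is not among them and the swap is again an
STC-labeling, or one of the colours `1, …, c` is missing there and putting it on `uv` removes a
weak edge. Pushing the weak edge once around the cycle composes the labeling with the cyclic
shift of the edge list (`List.formPerm` is exactly this product of swaps); `i` rounds give the
rotation by `i`. Swaps only permute labels among edges, so the weak count can change only when a
fresh colour is used.
-/

open SimpleGraph

noncomputable def weakCount {V : Type*} (G : SimpleGraph V) (ℓ : Sym2 V → ℕ) : ℕ :=
  {e ∈ G.edgeSet | ℓ e = 0}.ncard

def IsSTCLabeling {V : Type*} (G : SimpleGraph V) (c : ℕ) (ℓ : Sym2 V → ℕ) : Prop :=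
  (∀ e ∈ G.edgeSet, ℓ e ≤ c) ∧
  ∀ u v w : V, u ≠ w → G.Adj u v → G.Adj v w → ¬ G.Adj u w →
    ℓ s(u, v) = ℓ s(v, w) → ℓ s(u, v) = 0

theorem Nat.add_two_mod_ne_self {r j : ℕ} (hr : 3 ≤ r) (hj : j < r) : (j + 2) % r ≠ j := by
  rcases lt_or_ge (j + 2) r with h | h
  · rw [Nat.mod_eq_of_lt h]
    omega
  · rw [Nat.mod_eq_sub_mod h, Nat.mod_eq_of_lt (by omega)]
    omega

theorem List.isChain_of_forall_mem_formPerm {α : Type*} [DecidableEq α] {R : α → α → Prop}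
    {l : List α} (hl : l.Nodup) (h : ∀ x ∈ l, R x (l.formPerm x)) : l.IsChain R := by
  refine List.isChain_iff_getElem.mpr fun i hi => ?_
  have := h l[i] (List.getElem_mem _)
  simpa only [List.formPerm_apply_getElem _ hl, Nat.mod_eq_of_lt hi] using this

section

variable {V : Type*} {G : SimpleGraph V} {c : ℕ}

def IsLowDegreeTurn (G : SimpleGraph V) (c : ℕ) (e f : Sym2 V) : Prop :=
  ∃ u v w, G.Adj u v ∧ G.Adj v w ∧ u ≠ w ∧
    (G.neighborSet u).ncard + (G.neighborSet v).ncard ≤ c + 2 ∧ e = s(u, v) ∧ f = s(v, w)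

theorem IsLowDegreeTurn.fst_mem_edgeSet {e f : Sym2 V} (h : IsLowDegreeTurn G c e f) :
    e ∈ G.edgeSet := by
  obtain ⟨u, v, w, huv, -, -, -, rfl, -⟩ := h
  exact huv

theorem weakCount_comp_perm [Finite V] (ℓ : Sym2 V → ℕ) {τ : Equiv.Perm (Sym2 V)}
    (hτ : ∀ e, τ e ≠ e → e ∈ G.edgeSet) : weakCount G (ℓ ∘ τ) = weakCount G ℓ := by
  have hmem : ∀ e, τ e ∈ G.edgeSet ↔ e ∈ G.edgeSet := by
    intro e
    by_cases he : τ e = e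
    · rw [he]
    · exact iff_of_true (hτ _ fun h => he (τ.injective h)) (hτ e he)
  have hpre : {e ∈ G.edgeSet | (ℓ ∘ τ) e = 0} = τ ⁻¹' {e ∈ G.edgeSet | ℓ e = 0} := by
    ext e
    simp [hmem]
  rw [weakCount, hpre, Set.ncard_preimage_of_injective_subset_range τ.injective (by simp)]
  rfl

def cycleEdges (P : ℕ → V) (r : ℕ) : List (Sym2 V) :=
  (List.range r).map fun j => s(P j, P ((j + 1) % r))

section cycle

variable {P : ℕ → V} {r : ℕ}

@[simp]
theorem length_cycleEdges : (cycleEdges P r).length = r := by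
  simp [cycleEdges]

@[simp]
theorem getElem_cycleEdges {j : ℕ} (hj : j < (cycleEdges P r).length) :
    (cycleEdges P r)[j] = s(P j, P ((j + 1) % r)) := by
  simp [cycleEdges]

theorem mem_cycleEdges {e : Sym2 V} :
    e ∈ cycleEdges P r ↔ ∃ j < r, e = s(P j, P ((j + 1) % r)) := by
  simp [cycleEdges, eq_comm]

theorem nodup_cycleEdges (hr : 3 ≤ r) (hinj : ∀ i < r, ∀ j < r, P i = P j → i = j) :
    (cycleEdges P r).Nodup := by
  refine List.nodup_range.map_on fun i hi j hj hij => ?_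
  rw [List.mem_range] at hi hj
  have hmod : ∀ k, k % r < r := fun k => Nat.mod_lt k (by omega)
  rcases Sym2.eq_iff.mp hij with ⟨h, -⟩ | ⟨h, h'⟩
  · exact hinj i hi j hj h
  · have hi' := hinj i hi _ (hmod _) h
    have hj' := hinj _ (hmod _) j hj h'
    rw [hi', Nat.mod_add_mod] at hj'
    exact absurd hj' (Nat.add_two_mod_ne_self hr hj)

end cycle

variable [DecidableEq V]

theorem IsSTCLabeling.update {ℓ : Sym2 V → ℕ} (hℓ : IsSTCLabeling G c ℓ) {e : Sym2 V} {α : ℕ}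
    (hα : α ≤ c)
    (hfresh : α ≠ 0 → ∀ x y, G.Adj x y → x ∈ e → s(x, y) ≠ e → ℓ s(x, y) ≠ α) :
    IsSTCLabeling G c (Function.update ℓ e α) := by
  refine ⟨fun f hf => ?_, fun a b d had hab hbd hnad heq => ?_⟩
  · rcases eq_or_ne f e with rfl | hfe
    · simpa using hα
    · simpa [hfe] using hℓ.1 f hf
  have key : ∀ a d, a ≠ d → G.Adj b d → s(a, b) = e →
      Function.update ℓ e α s(b, d) = α → α = 0 := by
    intro a d had hbd hab h
    by_contra hα0
    have hbd_ne : s(b, d) ≠ e := by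
      rw [← hab, Ne, Sym2.eq_swap (a := a), Sym2.congr_right]
      exact had.symm
    rw [Function.update_of_ne hbd_ne] at h
    exact hfresh hα0 b d hbd (hab ▸ Sym2.mem_mk_right a b) hbd_ne h
  by_cases hab_e : s(a, b) = e
  · rw [hab_e, Function.update_self] at heq ⊢
    exact key a d had hbd hab_e heq.symm
  by_cases hbd_e : s(b, d) = e
  · rw [hbd_e, Function.update_self] at heq
    rw [heq]
    exact key d a (Ne.symm had) hab.symm (by rwa [Sym2.eq_swap]) (by rwa [Sym2.eq_swap])
  rw [Function.update_of_ne hab_e, Function.update_of_ne hbd_e] at heq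
  rw [Function.update_of_ne hab_e]
  exact hℓ.2 a b d had hab hbd hnad heq

theorem weakCount_update_lt [Finite V] {ℓ : Sym2 V → ℕ} {e : Sym2 V} {α : ℕ}
    (he : e ∈ G.edgeSet) (hℓe : ℓ e = 0) (hα : α ≠ 0) :
    weakCount G (Function.update ℓ e α) < weakCount G ℓ := by
  have hset : {f ∈ G.edgeSet | Function.update ℓ e α f = 0} =
      {f ∈ G.edgeSet | ℓ f = 0} \ {e} := by
    ext f
    rcases eq_or_ne f e with rfl | hfe <;> simp [*]
  rw [weakCount, weakCount, hset]
  exact Set.ncard_sdiff_singleton_lt_of_mem ⟨he, hℓe⟩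

theorem IsSTCLabeling.comp_swap_or_exists_update [Finite V] {μ : Sym2 V → ℕ}
    (hμ : IsSTCLabeling G c μ) {u v w : V} (huv : G.Adj u v) (hvw : G.Adj v w) (huw : u ≠ w)
    (hdeg : (G.neighborSet u).ncard + (G.neighborSet v).ncard ≤ c + 2) (h0 : μ s(u, v) = 0) :
    IsSTCLabeling G c (μ ∘ Equiv.swap s(u, v) s(v, w)) ∨
      ∃ α ≠ 0, IsSTCLabeling G c (Function.update μ s(u, v) α) := by
  set F : Set ℕ := (fun x => μ s(u, x)) '' (G.neighborSet u \ {v}) ∪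
    (fun y => μ s(v, y)) '' (G.neighborSet v \ {u, w})
  have hF : F.ncard < (Set.Icc 1 c).ncard := by
    have hu := Set.ncard_sdiff_singleton_add_one (show v ∈ G.neighborSet u from huv)
    have hv := Set.ncard_sdiff_add_ncard_of_subset
      (show {u, w} ⊆ G.neighborSet v from Set.pair_subset huv.symm hvw)
    have himg : F.ncard ≤ _ := (Set.ncard_union_le _ _).trans
      (add_le_add (Set.ncard_image_le (s := G.neighborSet u \ {v}) (f := fun x => μ s(u, x)))
        (Set.ncard_image_le (s := G.neighborSet v \ {u, w}) (f := fun y => μ s(v, y))))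
    rw [Set.ncard_pair huw] at hv
    rw [Set.ncard_Icc_nat, add_tsub_cancel_right]
    omega
  have hseen : ∀ x y, G.Adj x y → x ∈ s(u, v) → s(x, y) ≠ s(u, v) → s(x, y) ≠ s(v, w) →
      μ s(x, y) ∈ F := by
    intro x y hxy hx hne hne'
    rcases Sym2.mem_iff.mp hx with rfl | rfl
    · refine Or.inl ⟨y, ⟨hxy, ?_⟩, rfl⟩
      rintro rfl
      exact hne rfl
    · refine Or.inr ⟨y, ⟨hxy, ?_⟩, rfl⟩
      rintro (rfl | rfl)
      · exact hne Sym2.eq_swap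
      · exact hne' rfl
  by_cases hswap : μ s(v, w) = 0 ∨ μ s(v, w) ∉ F
  · left
    rw [Equiv.comp_swap_eq_update, h0]
    refine (hμ.update c.zero_le (by simp)).update (hμ.1 _ hvw) fun hβ x y hxy hx hne => ?_
    rcases eq_or_ne s(x, y) s(v, w) with hvw' | hvw'
    · rw [hvw', Function.update_self]
      exact Ne.symm hβ
    · rw [Function.update_of_ne hvw']
      exact fun h => hswap.resolve_left hβ (h ▸ hseen x y hxy hx hne hvw')
  · right
    push Not at hswap
    obtain ⟨α, hα, hαF⟩ := Set.exists_mem_notMem_of_ncard_lt_ncard hF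
    refine ⟨α, Nat.pos_iff_ne_zero.mp hα.1, hμ.update hα.2 fun _ x y hxy hx hne => ?_⟩
    rcases eq_or_ne s(x, y) s(v, w) with hvw' | hvw'
    · rw [hvw']
      exact fun h => hαF (h ▸ hswap.2)
    · exact fun h => hαF (h ▸ hseen x y hxy hx hne hvw')

theorem IsSTCLabeling.comp_formPerm_or_exists_weakCount_lt [Finite V] {a : Sym2 V}
    {l : List (Sym2 V)} {μ : Sym2 V → ℕ} (hμ : IsSTCLabeling G c μ)
    (hl : (a :: l).IsChain (IsLowDegreeTurn G c)) (h0 : μ a = 0) :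
    IsSTCLabeling G c (μ ∘ (a :: l).formPerm) ∨
      ∃ ν, IsSTCLabeling G c ν ∧ (∀ e ∉ a :: l, ν e = μ e) ∧ weakCount G ν < weakCount G μ := by
  induction l generalizing a μ with
  | nil => simp [hμ]
  | cons b l ih =>
    rw [List.isChain_cons_cons] at hl
    obtain ⟨⟨u, v, w, huv, hvw, huw, hdeg, rfl, rfl⟩, hl⟩ := hl
    rcases hμ.comp_swap_or_exists_update huv hvw huw hdeg h0 with hswap | ⟨α, hα, hupd⟩
    · rcases ih hswap hl (by simpa using h0) with h | h
      · left
        rwa [List.formPerm_cons_cons, Equiv.Perm.coe_mul, ← Function.comp_assoc]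
      · right
        obtain ⟨ν, hν, hagree, hlt⟩ := h
        refine ⟨ν, hν, fun e he => ?_, ?_⟩
        · simp only [List.mem_cons, not_or] at he
          rw [hagree e (List.mem_cons.not.mpr (by tauto)), Function.comp_apply,
            Equiv.swap_apply_of_ne_of_ne he.1 he.2.1]
        · rwa [weakCount_comp_perm μ fun e he => ?_] at hlt
          rcases (Equiv.swap_apply_ne_self_iff.mp he).2 with rfl | rfl
          exacts [huv, hvw]
    · right
      refine ⟨_, hupd, fun e he => Function.update_of_ne (List.ne_of_not_mem_cons he) _ _,
        weakCount_update_lt huv h0 hα⟩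

theorem IsSTCLabeling.comp_formPerm_or_exists_weakCount_lt_of_mem [Finite V]
    {l : List (Sym2 V)} {μ : Sym2 V → ℕ} (hμ : IsSTCLabeling G c μ) (hl : l.Nodup)
    (hturn : ∀ e ∈ l, IsLowDegreeTurn G c e (l.formPerm e)) {a : Sym2 V} (ha : a ∈ l)
    (h0 : μ a = 0) :
    IsSTCLabeling G c (μ ∘ l.formPerm) ∨
      ∃ ν, IsSTCLabeling G c ν ∧ (∀ e ∉ l, ν e = μ e) ∧ weakCount G ν < weakCount G μ := by
  obtain ⟨s, t, rfl⟩ := List.append_of_mem ha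
  have hrot : (s ++ a :: t) ~r (a :: (t ++ s)) := List.isRotated_append
  have hperm := List.formPerm_eq_of_isRotated hl hrot
  have hchain : (a :: (t ++ s)).IsChain (IsLowDegreeTurn G c) :=
    List.isChain_of_forall_mem_formPerm (hrot.nodup_iff.mp hl) fun x hx => by
      rw [← hperm]
      exact hturn x (hrot.mem_iff.mpr hx)
  simp only [hperm, hrot.mem_iff]
  exact hμ.comp_formPerm_or_exists_weakCount_lt hchain h0

theorem IsSTCLabeling.exists_comp_formPerm_pow_or_weakCount_lt [Finite V]
    {l : List (Sym2 V)} {ℓ : Sym2 V → ℕ} (hℓ : IsSTCLabeling G c ℓ) (hl : l.Nodup)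
    (hturn : ∀ e ∈ l, IsLowDegreeTurn G c e (l.formPerm e)) (hweak : ∃ a ∈ l, ℓ a = 0)
    (k : ℕ) :
    ∃ ν, IsSTCLabeling G c ν ∧ (∀ e ∉ l, ν e = ℓ e) ∧
      (ν = ℓ ∘ ⇑(l.formPerm ^ k) ∨ weakCount G ν < weakCount G ℓ) := by
  induction k with
  | zero => exact ⟨ℓ, hℓ, fun _ _ => rfl, Or.inl rfl⟩
  | succ k ih =>
    obtain ⟨ν, hν, hagree, rfl | hlt⟩ := ih
    · obtain ⟨a, ha, h0⟩ := hweak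
      have hfix : ∀ n : ℕ, ∀ e ∉ l, (l.formPerm ^ n) e = e := fun n e he =>
        Equiv.Perm.pow_apply_eq_self_of_apply_eq_self (List.formPerm_apply_of_notMem he) n
      -- `ℓ ∘ formPerm l ^ k` is weak at `(formPerm l ^ k)⁻¹ a`
      have ha' : (l.formPerm ^ k)⁻¹ a ∈ l := by
        simpa [zpow_neg] using List.form_perm_zpow_apply_mem_imp_mem l a ha (-k)
      rcases hν.comp_formPerm_or_exists_weakCount_lt_of_mem hl hturn ha' (by simpa using h0)
        with hstc | ⟨ν', hν', hagree', hlt⟩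
      · refine ⟨_, hstc, fun e he => ?_, Or.inl (by rw [pow_succ]; rfl)⟩
        simp [hfix k e he, List.formPerm_apply_of_notMem he]
      · refine ⟨ν', hν', fun e he => (hagree' e he).trans (hagree e he), Or.inr ?_⟩
        rwa [weakCount_comp_perm ℓ fun e he => ?_] at hlt
        by_contra he'
        exact he (hfix k e fun hel => he' (hturn e hel).fst_mem_edgeSet)
    · exact ⟨ν, hν, hagree, Or.inr hlt⟩

section cycle

variable {P : ℕ → V} {r : ℕ}

theorem formPerm_cycleEdges_pow_apply (hnd : (cycleEdges P r).Nodup) (n : ℕ) {j : ℕ}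
    (hj : j < r) :
    ((cycleEdges P r).formPerm ^ n) s(P j, P ((j + 1) % r)) =
      s(P ((j + n) % r), P ((j + n + 1) % r)) := by
  have h := List.formPerm_pow_apply_getElem _ hnd n j (by simpa using hj)
  simpa only [getElem_cycleEdges, length_cycleEdges, Nat.mod_add_mod] using h

theorem isLowDegreeTurn_cycleEdges (hr : 3 ≤ r)
    (hinj : ∀ i < r, ∀ j < r, P i = P j → i = j) (hadj : ∀ i < r, G.Adj (P i) (P ((i + 1) % r)))
    (hdeg : ∀ i < r, (G.neighborSet (P i)).ncard + (G.neighborSet (P ((i + 1) % r))).ncard ≤ c + 2)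
    {e : Sym2 V} (he : e ∈ cycleEdges P r) :
    IsLowDegreeTurn G c e ((cycleEdges P r).formPerm e) := by
  obtain ⟨j, hj, rfl⟩ := mem_cycleEdges.mp he
  have hmod : ∀ k, k % r < r := fun k => Nat.mod_lt k (by omega)
  have hj' := formPerm_cycleEdges_pow_apply (nodup_cycleEdges hr hinj) 1 hj
  rw [pow_one] at hj'
  refine ⟨P j, P ((j + 1) % r), P ((j + 2) % r), hadj j hj, ?_, fun h => ?_, hdeg j hj, rfl, hj'⟩
  · simpa [Nat.mod_add_mod] using hadj _ (hmod (j + 1))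
  · exact Nat.add_two_mod_ne_self hr hj (hinj _ hj _ (hmod _) h).symm

end cycle

end

/-- Rotating the color sequence around a cycle inside a set of low-degree
vertices that carries at least one weak edge: for every `i` there is a labeling
agreeing with `L` outside the cycle whose color sequence is the `i`-th cyclic
rotation, or one with strictly fewer weak edges. -/
theorem rotate_colors_around_cycle {V : Type*} [Fintype V] [DecidableEq V]
    (G : SimpleGraph V) (c : ℕ)
    (A : Set V) (hdeg : ∀ a ∈ A, (G.neighborSet a).ncard ≤ c / 2 + 1)
    (ℓ : Sym2 V → ℕ) (hstc : IsSTCLabeling G c ℓ)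
    (r : ℕ) (hr : 3 ≤ r) (P : ℕ → V)
    (hadj : ∀ i < r, G.Adj (P i) (P ((i + 1) % r)))
    (hA : ∀ i < r, P i ∈ A)
    (hinj : ∀ i < r, ∀ j < r, P i = P j → i = j)
    (hweak : ∃ i < r, ℓ s(P i, P ((i + 1) % r)) = 0)
    (EP : Set (Sym2 V)) (hEP : EP = {e | ∃ i < r, e = s(P i, P ((i + 1) % r))}) :
    ∀ i < r, ∃ ℓᵢ : Sym2 V → ℕ, IsSTCLabeling G c ℓᵢ ∧
      (∀ e : Sym2 V, e ∉ EP → ℓᵢ e = ℓ e) ∧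
      ((∀ j < r, ℓᵢ s(P j, P ((j + 1) % r)) =
          ℓ s(P ((i + j) % r), P ((i + j + 1) % r))) ∨
        weakCount G ℓᵢ < weakCount G ℓ) := by
  intro i _
  subst hEP
  have hnd := nodup_cycleEdges hr hinj
  have hdeg' : ∀ j < r, (G.neighborSet (P j)).ncard +
      (G.neighborSet (P ((j + 1) % r))).ncard ≤ c + 2 := fun j hj => by
    have := hdeg _ (hA j hj)
    have := hdeg _ (hA ((j + 1) % r) (Nat.mod_lt _ (by omega)))
    omega
  have hweak' : ∃ a ∈ cycleEdges P r, ℓ a = 0 := by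
    obtain ⟨j, hj, h0⟩ := hweak
    exact ⟨_, mem_cycleEdges.mpr ⟨j, hj, rfl⟩, h0⟩
  obtain ⟨ν, hν, hagree, hrot⟩ := hstc.exists_comp_formPerm_pow_or_weakCount_lt hnd
    (fun e he => isLowDegreeTurn_cycleEdges hr hinj hadj hdeg' he) hweak' i
  refine ⟨ν, hν, fun e he => hagree e (mt mem_cycleEdges.mp he), hrot.imp_left ?_⟩
  rintro rfl j hj
  rw [Function.comp_apply, formPerm_cycleEdges_pow_apply hnd i hj, add_comm j i]
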